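/- Under Assumptions A1–A3 and A5, the kernel of I − X^⊤ S equals the redundancy space: ker(I − X^⊤ S) = Z := ker(T^⊤) ∩ ker(I + X^⊤). -/

import Mathlib

/-!
Write `N = M + X^⊤ M X` and `u = Ã⁻¹ T^⊤ μ`, so that `S μ = -μ + α N T u`. Since `X² = I` we have
`X^⊤ N = N X`, and `μ ∈ ker(I − X^⊤ S)` reads `(I + X^⊤) μ = α N X T u`. Applying `X^⊤` to this
identity leaves the left side unchanged and turns the right side into `α N T u`; as `N` is
injective, `T u` is fixed by `X`, so `u = R û` by A2. Testing the identity against the `X`-fixed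
vectors `T R v` gives `μ (T R v) = α M (T u) (T R v)`, which together with `Ã u = T^⊤ μ` says
`Â û = 0`. Hence `u = 0`, and then `T^⊤ μ = Ã u = 0` and `(I + X^⊤) μ = 0`.
-/

/-- The transpose (dual map) `B^⊤ : Y* → X*` of a bounded linear operator `B : X → Y`. -/
noncomputable def trOp {X Y : Type*} [NormedAddCommGroup X] [NormedSpace ℂ X]
    [NormedAddCommGroup Y] [NormedSpace ℂ Y] (B : X →L[ℂ] Y) :
    (Y →L[ℂ] ℂ) →L[ℂ] (X →L[ℂ] ℂ) :=
  (ContinuousLinearMap.compL ℂ X Y ℂ).flip B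

/-- The scattering operator `S = −I + α (M + X^⊤ M X) T Ã⁻¹ T^⊤`, with `Atinv = Ã⁻¹`. -/
noncomputable def scatOp {U Lam : Type*}
    [NormedAddCommGroup U] [NormedSpace ℂ U] [NormedAddCommGroup Lam] [NormedSpace ℂ Lam]
    (T : U →L[ℂ] Lam) (X : Lam →L[ℂ] Lam) (M : Lam →L[ℂ] (Lam →L[ℂ] ℂ))
    (Atinv : (U →L[ℂ] ℂ) →L[ℂ] U) (α : ℂ) :
    (Lam →L[ℂ] ℂ) →L[ℂ] (Lam →L[ℂ] ℂ) :=
  -(ContinuousLinearMap.id ℂ (Lam →L[ℂ] ℂ)) +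
    α • (((M + (trOp X).comp (M.comp X)).comp T).comp (Atinv.comp (trOp T)))

noncomputable def reflSymm {E : Type*} [NormedAddCommGroup E] [NormedSpace ℂ E]
    (M : E →L[ℂ] (E →L[ℂ] ℂ)) (X : E →L[ℂ] E) : E →L[ℂ] (E →L[ℂ] ℂ) :=
  M + (trOp X).comp (M.comp X)

section Transpose

variable {E F : Type*} [NormedAddCommGroup E] [NormedSpace ℂ E]
  [NormedAddCommGroup F] [NormedSpace ℂ F]

@[simp]
lemma trOp_apply (B : E →L[ℂ] F) (μ : F →L[ℂ] ℂ) (v : E) : trOp B μ v = μ (B v) := rfl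

variable {X : E →L[ℂ] E}

lemma apply_apply_of_comp_eq_id (hX : X.comp X = .id ℂ E) (v : E) : X (X v) = v :=
  congrArg (· v) hX

lemma trOp_trOp_of_comp_eq_id (hX : X.comp X = .id ℂ E) (μ : E →L[ℂ] ℂ) :
    trOp X (trOp X μ) = μ := by
  ext v
  simp [apply_apply_of_comp_eq_id hX]

lemma reflSymm_apply_apply (M : E →L[ℂ] (E →L[ℂ] ℂ)) (X : E →L[ℂ] E) (y w : E) :
    reflSymm M X y w = M y w + M (X y) (X w) := rfl

lemma trOp_reflSymm_apply (hX : X.comp X = .id ℂ E) (M : E →L[ℂ] (E →L[ℂ] ℂ)) (y : E) :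
    trOp X (reflSymm M X y) = reflSymm M X (X y) := by
  ext w
  simp only [trOp_apply, reflSymm_apply_apply, apply_apply_of_comp_eq_id hX]
  ring

lemma reflSymm_apply_apply_of_fixed (M : E →L[ℂ] (E →L[ℂ] ℂ)) {y w : E}
    (hy : X y = y) (hw : X w = w) : reflSymm M X y w = 2 * M y w := by
  rw [reflSymm_apply_apply, hy, hw]
  ring

end Transpose

section Scattering

variable {U Lam : Type*} [NormedAddCommGroup U] [NormedSpace ℂ U]
  [NormedAddCommGroup Lam] [NormedSpace ℂ Lam]
  {T : U →L[ℂ] Lam} {X : Lam →L[ℂ] Lam} {M : Lam →L[ℂ] (Lam →L[ℂ] ℂ)}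
  {Atinv : (U →L[ℂ] ℂ) →L[ℂ] U} {α : ℂ}

lemma scatOp_apply (μ : Lam →L[ℂ] ℂ) :
    scatOp T X M Atinv α μ = -μ + α • reflSymm M X (T (Atinv (trOp T μ))) := rfl

lemma sub_trOp_scatOp_apply (hX : X.comp X = .id ℂ Lam) (μ : Lam →L[ℂ] ℂ) :
    (ContinuousLinearMap.id ℂ (Lam →L[ℂ] ℂ) - (trOp X).comp (scatOp T X M Atinv α)) μ =
      μ + trOp X μ - α • reflSymm M X (X (T (Atinv (trOp T μ)))) := by
  rw [sub_apply, ContinuousLinearMap.id_apply, ContinuousLinearMap.comp_apply, scatOp_apply,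
    map_add, map_neg, map_smul, trOp_reflSymm_apply hX]
  abel

/-- Applying `X^⊤` to `μ + X^⊤ μ = α N (X y)` gives the same left side and `α N y` on the right. -/
lemma apply_eq_self_of_add_trOp_eq (hX : X.comp X = .id ℂ Lam)
    (hN : Function.Injective (reflSymm M X)) (hα : α ≠ 0) {μ : Lam →L[ℂ] ℂ} {y : Lam}
    (h : μ + trOp X μ = α • reflSymm M X (X y)) :
    X y = y := by
  have h' := congrArg (trOp X) h
  rw [map_add, trOp_trOp_of_comp_eq_id hX, map_smul, trOp_reflSymm_apply hX,
    apply_apply_of_comp_eq_id hX, add_comm, h] at h'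
  exact hN (smul_right_injective _ hα h')

lemma apply_eq_of_add_trOp_eq {μ : Lam →L[ℂ] ℂ} {y w : Lam}
    (h : μ + trOp X μ = α • reflSymm M X y) (hy : X y = y) (hw : X w = w) :
    μ w = α * M y w := by
  have h' := congrArg (· w) h
  simp only [add_apply, trOp_apply, smul_apply, hw, reflSymm_apply_apply_of_fixed M hy hw,
    smul_eq_mul] at h'
  linear_combination h' / 2

lemma ker_trOp_inf_ker_add_trOp_le (hX : X.comp X = .id ℂ Lam) :
    LinearMap.ker (trOp T : (Lam →L[ℂ] ℂ) →ₗ[ℂ] (U →L[ℂ] ℂ)) ⊓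
        LinearMap.ker ((ContinuousLinearMap.id ℂ (Lam →L[ℂ] ℂ) + trOp X :
          (Lam →L[ℂ] ℂ) →L[ℂ] (Lam →L[ℂ] ℂ)) : (Lam →L[ℂ] ℂ) →ₗ[ℂ] (Lam →L[ℂ] ℂ)) ≤
      LinearMap.ker ((ContinuousLinearMap.id ℂ (Lam →L[ℂ] ℂ) -
        (trOp X).comp (scatOp T X M Atinv α) :
          (Lam →L[ℂ] ℂ) →L[ℂ] (Lam →L[ℂ] ℂ)) : (Lam →L[ℂ] ℂ) →ₗ[ℂ] (Lam →L[ℂ] ℂ)) := by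
  rintro μ ⟨hTμ, hXμ⟩
  rw [LinearMap.mem_ker, ContinuousLinearMap.coe_coe, sub_trOp_scatOp_apply hX,
    show trOp T μ = 0 from hTμ]
  -- `smul_zero` does not fire on `ℂ`-valued functionals: instance search finds a `ℂ`-action
  -- that is not reducibly the one in the term, whereas `DistribMulAction.smul_zero` unifies.
  simpa [DistribMulAction.smul_zero] using hXμ

variable {Uhat : Type*} [NormedAddCommGroup Uhat] [NormedSpace ℂ Uhat] {R : Uhat →L[ℂ] U}

lemma apply_eq_self_of_mem_range
    (hR : LinearMap.range (R : Uhat →ₗ[ℂ] U) =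
      LinearMap.ker ((ContinuousLinearMap.id ℂ Lam - X).comp T : U →ₗ[ℂ] Lam))
    (v : Uhat) : X (T (R v)) = T (R v) := by
  have hv : R v ∈ LinearMap.ker ((ContinuousLinearMap.id ℂ Lam - X).comp T : U →ₗ[ℂ] Lam) :=
    hR ▸ LinearMap.mem_range_self _ v
  exact (sub_eq_zero.mp (by simpa using hv)).symm

lemma ker_sub_trOp_scatOp_le (hX : X.comp X = .id ℂ Lam)
    (hR : LinearMap.range (R : Uhat →ₗ[ℂ] U) =
      LinearMap.ker ((ContinuousLinearMap.id ℂ Lam - X).comp T : U →ₗ[ℂ] Lam))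
    {A : U →L[ℂ] (U →L[ℂ] ℂ)} {Ahatinv : (Uhat →L[ℂ] ℂ) →L[ℂ] Uhat}
    (hAhat : ∀ uhat : Uhat, Ahatinv (trOp R (A (R uhat))) = uhat) (hα : α ≠ 0)
    (hN : Function.Injective (reflSymm M X))
    (hAt : ∀ g : U →L[ℂ] ℂ, (A + α • ((trOp T).comp (M.comp T))) (Atinv g) = g) :
    LinearMap.ker ((ContinuousLinearMap.id ℂ (Lam →L[ℂ] ℂ) -
        (trOp X).comp (scatOp T X M Atinv α) :
          (Lam →L[ℂ] ℂ) →L[ℂ] (Lam →L[ℂ] ℂ)) : (Lam →L[ℂ] ℂ) →ₗ[ℂ] (Lam →L[ℂ] ℂ)) ≤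
      LinearMap.ker (trOp T : (Lam →L[ℂ] ℂ) →ₗ[ℂ] (U →L[ℂ] ℂ)) ⊓
        LinearMap.ker ((ContinuousLinearMap.id ℂ (Lam →L[ℂ] ℂ) + trOp X :
          (Lam →L[ℂ] ℂ) →L[ℂ] (Lam →L[ℂ] ℂ)) : (Lam →L[ℂ] ℂ) →ₗ[ℂ] (Lam →L[ℂ] ℂ)) := by
  intro μ hμ
  set u := Atinv (trOp T μ) with hu_def
  have hfix : μ + trOp X μ = α • reflSymm M X (X (T u)) :=
    sub_eq_zero.mp ((sub_trOp_scatOp_apply hX μ).symm.trans hμ)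
  have hTu : X (T u) = T u := apply_eq_self_of_add_trOp_eq hX hN hα hfix
  rw [hTu] at hfix
  have hu : u = 0 := by
    obtain ⟨uhat, huhat : R uhat = u⟩ : u ∈ LinearMap.range (R : Uhat →ₗ[ℂ] U) := by
      rw [hR]
      simp [hTu]
    suffices trOp R (A u) = 0 by
      rw [← huhat, ← hAhat uhat, huhat, this, map_zero, map_zero]
    ext v
    have hAu := congrArg (· (R v)) (hAt (trOp T μ))
    simp only [add_apply, smul_apply, ContinuousLinearMap.comp_apply, trOp_apply, smul_eq_mul,
      ← hu_def, apply_eq_of_add_trOp_eq hfix hTu (apply_eq_self_of_mem_range hR v)] at hAu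
    simpa using hAu
  have hTμ : trOp T μ = 0 := by rw [← hAt (trOp T μ), ← hu_def, hu, map_zero]
  exact ⟨hTμ, by simpa [hu, DistribMulAction.smul_zero] using hfix⟩

end Scattering

theorem statement12_general
    {Uhat U Lam : Type*}
    [NormedAddCommGroup Uhat] [InnerProductSpace ℂ Uhat]
    [NormedAddCommGroup U] [InnerProductSpace ℂ U]
    [NormedAddCommGroup Lam] [InnerProductSpace ℂ Lam]
    (R : Uhat →L[ℂ] U) (T : U →L[ℂ] Lam) (X : Lam →L[ℂ] Lam)
    -- Assumption A2
    (hX2 : X.comp X = ContinuousLinearMap.id ℂ Lam)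
    (hA2 : LinearMap.range (R : Uhat →ₗ[ℂ] U) = LinearMap.ker ((ContinuousLinearMap.id ℂ Lam - X).comp T : U →ₗ[ℂ] Lam))
    (A : U →L[ℂ] (U →L[ℂ] ℂ))
    -- `Â = R^⊤ A R` bijective with bounded inverse
    (Ahatinv : (Uhat →L[ℂ] ℂ) →L[ℂ] Uhat)
    (hAhat_left : ∀ uhat : Uhat, Ahatinv (trOp R (A (R uhat))) = uhat)
    (α : ℂ) (hα : α ≠ 0)
    (M : Lam →L[ℂ] (Lam →L[ℂ] ℂ))
    -- Assumption A3: `M + X^⊤ M X` has a bounded inverse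
    (Ninv : (Lam →L[ℂ] ℂ) →L[ℂ] Lam)
    (hNl : ∀ l : Lam, Ninv ((M + (trOp X).comp (M.comp X)) l) = l)
    -- Assumption A5: `Ã = A + α T^⊤ M T` has a bounded inverse
    (Atinv : (U →L[ℂ] ℂ) →L[ℂ] U)
    (hAt_r : ∀ g : U →L[ℂ] ℂ, (A + α • ((trOp T).comp (M.comp T))) (Atinv g) = g) :
    LinearMap.ker ((ContinuousLinearMap.id ℂ (Lam →L[ℂ] ℂ) -
        (trOp X).comp (scatOp T X M Atinv α) :
          (Lam →L[ℂ] ℂ) →L[ℂ] (Lam →L[ℂ] ℂ)) : (Lam →L[ℂ] ℂ) →ₗ[ℂ] (Lam →L[ℂ] ℂ)) =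
      LinearMap.ker (trOp T : (Lam →L[ℂ] ℂ) →ₗ[ℂ] (U →L[ℂ] ℂ)) ⊓
        LinearMap.ker ((ContinuousLinearMap.id ℂ (Lam →L[ℂ] ℂ) + trOp X :
          (Lam →L[ℂ] ℂ) →L[ℂ] (Lam →L[ℂ] ℂ)) : (Lam →L[ℂ] ℂ) →ₗ[ℂ] (Lam →L[ℂ] ℂ)) :=
  le_antisymm
    (ker_sub_trOp_scatOp_le hX2 hA2 hAhat_left hα (Function.LeftInverse.injective hNl) hAt_r)
    (ker_trOp_inf_ker_add_trOp_le hX2)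

/-- `ker(I − X^⊤ S) = Z = ker(T^⊤) ∩ ker(I + X^⊤)`. -/
theorem statement12
    {Uhat U Lam : Type*}
    [NormedAddCommGroup Uhat] [InnerProductSpace ℂ Uhat] [CompleteSpace Uhat]
    [NormedAddCommGroup U] [InnerProductSpace ℂ U] [CompleteSpace U]
    [NormedAddCommGroup Lam] [InnerProductSpace ℂ Lam] [CompleteSpace Lam]
    (R : Uhat →L[ℂ] U) (T : U →L[ℂ] Lam) (X : Lam →L[ℂ] Lam)
    -- Assumption A1
    (hRinj : LinearMap.ker (R : Uhat →ₗ[ℂ] U) = ⊥)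
    (hRclosed : IsClosed (Set.range R))
    -- Assumption A2
    (hX2 : X.comp X = ContinuousLinearMap.id ℂ Lam)
    (hA2 : LinearMap.range (R : Uhat →ₗ[ℂ] U) = LinearMap.ker ((ContinuousLinearMap.id ℂ Lam - X).comp T : U →ₗ[ℂ] Lam))
    (A : U →L[ℂ] (U →L[ℂ] ℂ))
    -- `Â = R^⊤ A R` bijective with bounded inverse
    (Ahatinv : (Uhat →L[ℂ] ℂ) →L[ℂ] Uhat)
    (hAhat_left : ∀ uhat : Uhat, Ahatinv (trOp R (A (R uhat))) = uhat)
    (hAhat_right : ∀ g : Uhat →L[ℂ] ℂ, trOp R (A (R (Ahatinv g))) = g)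
    (α : ℂ) (hα : α ≠ 0)
    (M : Lam →L[ℂ] (Lam →L[ℂ] ℂ))
    -- Assumption A3: `M + X^⊤ M X` has a bounded inverse
    (Ninv : (Lam →L[ℂ] ℂ) →L[ℂ] Lam)
    (hNl : ∀ l : Lam, Ninv ((M + (trOp X).comp (M.comp X)) l) = l)
    (hNr : ∀ μ : Lam →L[ℂ] ℂ, (M + (trOp X).comp (M.comp X)) (Ninv μ) = μ)
    -- Assumption A5: `Ã = A + α T^⊤ M T` has a bounded inverse
    (Atinv : (U →L[ℂ] ℂ) →L[ℂ] U)
    (hAt_l : ∀ u : U, Atinv ((A + α • ((trOp T).comp (M.comp T))) u) = u)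
    (hAt_r : ∀ g : U →L[ℂ] ℂ, (A + α • ((trOp T).comp (M.comp T))) (Atinv g) = g) :
    LinearMap.ker ((ContinuousLinearMap.id ℂ (Lam →L[ℂ] ℂ) -
        (trOp X).comp (scatOp T X M Atinv α) :
          (Lam →L[ℂ] ℂ) →L[ℂ] (Lam →L[ℂ] ℂ)) : (Lam →L[ℂ] ℂ) →ₗ[ℂ] (Lam →L[ℂ] ℂ)) =
      LinearMap.ker (trOp T : (Lam →L[ℂ] ℂ) →ₗ[ℂ] (U →L[ℂ] ℂ)) ⊓
        LinearMap.ker ((ContinuousLinearMap.id ℂ (Lam →L[ℂ] ℂ) + trOp X :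
          (Lam →L[ℂ] ℂ) →L[ℂ] (Lam →L[ℂ] ℂ)) : (Lam →L[ℂ] ℂ) →ₗ[ℂ] (Lam →L[ℂ] ℂ)) :=
  statement12_general R T X hX2 hA2 A Ahatinv hAhat_left α hα M Ninv hNl Atinv hAt_r
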